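/- Suppose U ⊆ V has a δ-matching M in a bipartite graph with uniform variable degree d_v, and δ > 1 − 1/(4W + 2) for some W ≥ 1/2. Suppose the modified LLRs satisfy λ'ᵢ ≥ −W for all i, λ'ᵢ ≥ 1/2 for all i ∉ U. Then there exists a feasible edge weight assignment, i.e., weights τ_{ij} on edges such that (i) for each check j and distinct neighbors i, i' of j, τ_{ij} + τ_{i'j} ≥ 0, and (ii) for each variable node i, Σ_{j ∈ N(i)} τ_{ij} < λ'ᵢ. -/

import Mathlib

/-!
Put weight `-γ` on the matching edges out of `U`, weight `+γ` on every other edge at a check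
covered by one of them, and `0` elsewhere, with `γ = (2W + 1) / (2 d_v)`. Two edges at a check
sum to `≥ 0` since a check carries at most one matching edge. A node of `U` has at least
`δ d_v` edges of weight `-γ`, so its sum is at most `γ d_v (1 - 2δ) < -W`. A node outside `U`
only has edges of weight `+γ` or `0`, and at most `2(1 - δ) d_v` of the first kind: either it
has few neighbours in `N(U)`, or it lies in `U̇` and its own `(2δ - 1) d_v` matching edges go to
uncovered checks. Its sum is then at most `(2W + 1)(1 - δ) < 1/2`.
-/

open Finset

section

open scoped Classical

variable {V C : Type*}

def coveredChecks (M : Set (V × C)) (U : Set V) : Set C :=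
  {j | ∃ u ∈ U, (u, j) ∈ M}

noncomputable def matchingWeights (M : Set (V × C)) (U : Set V) (γ : ℝ) (i : V) (j : C) : ℝ :=
  if (i, j) ∈ M ∧ i ∈ U then -γ else if j ∈ coveredChecks M U then γ else 0

variable {M : Set (V × C)} {U : Set V} {γ : ℝ} {i : V} {j : C}

theorem matchingWeights_of_mem (h : (i, j) ∈ M ∧ i ∈ U) :
    matchingWeights M U γ i j = -γ := by
  simp only [matchingWeights, if_pos h]

theorem matchingWeights_of_covered (h : ¬((i, j) ∈ M ∧ i ∈ U)) (hj : j ∈ coveredChecks M U) :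
    matchingWeights M U γ i j = γ := by
  simp only [matchingWeights, if_neg h, if_pos hj]

theorem matchingWeights_of_notMem (hi : i ∉ U) :
    matchingWeights M U γ i j = if j ∈ coveredChecks M U then γ else 0 := by
  simp only [matchingWeights, hi, and_false, if_false]

theorem matchingWeights_nonneg (hγ : 0 ≤ γ) (h : ¬((i, j) ∈ M ∧ i ∈ U)) :
    0 ≤ matchingWeights M U γ i j := by
  simp only [matchingWeights, if_neg h]
  split_ifs <;> linarith

theorem matchingWeights_le (hγ : 0 ≤ γ) : matchingWeights M U γ i j ≤ γ := by
  unfold matchingWeights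
  split_ifs <;> linarith

/-- A check with an edge of weight `-γ` carries no other matching edge, so all its other edges
have weight `+γ`. -/
theorem matchingWeights_add_nonneg (hM : ∀ j a b, (a, j) ∈ M → (b, j) ∈ M → a = b)
    (hγ : 0 ≤ γ) {i i' : V} (hne : i ≠ i') (j : C) :
    0 ≤ matchingWeights M U γ i j + matchingWeights M U γ i' j := by
  wlog h : (i, j) ∈ M ∧ i ∈ U generalizing i i'
  · by_cases h' : (i', j) ∈ M ∧ i' ∈ U
    · rw [add_comm]
      exact this hne.symm h'
    · exact add_nonneg (matchingWeights_nonneg hγ h) (matchingWeights_nonneg hγ h')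
  have h' : ¬((i', j) ∈ M ∧ i' ∈ U) := fun h' => hne (hM j i i' h.1 h'.1)
  rw [matchingWeights_of_mem h, matchingWeights_of_covered h' ⟨i, h.2, h.1⟩, neg_add_cancel]

theorem sum_matchingWeights_of_notMem (N : Finset C) (hi : i ∉ U) :
    ∑ j ∈ N, matchingWeights M U γ i j = γ * #{j ∈ N | j ∈ coveredChecks M U} := by
  simp only [matchingWeights_of_notMem hi, sum_ite, sum_const, nsmul_eq_mul, zero_mul, add_zero,
    mul_comm]

theorem card_covered_add_card_matched_le (hM : ∀ j a b, (a, j) ∈ M → (b, j) ∈ M → a = b)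
    (N : Finset C) (hi : i ∉ U) :
    #{j ∈ N | j ∈ coveredChecks M U} + #{j ∈ N | (i, j) ∈ M} ≤ #N := by
  rw [← card_filter_add_card_filter_not (s := N) fun j => (i, j) ∈ M, add_comm]
  refine Nat.add_le_add_left (card_le_card fun j hj => ?_) _
  obtain ⟨hjN, u, hu, huj⟩ := mem_filter.1 hj
  refine mem_filter.2 ⟨hjN, ?_⟩
  exact fun hij => hi (hM j i u hij huj ▸ hu)

variable {Adj : V → C → Prop} {N : Finset C}

theorem ncard_matched_eq_card_filter (hM : ∀ e ∈ M, Adj e.1 e.2) (hN : ∀ j, j ∈ N ↔ Adj i j) :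
    {j | (i, j) ∈ M}.ncard = #{j ∈ N | (i, j) ∈ M} := by
  rw [← Set.ncard_coe_finset]
  congr 1
  ext j
  simpa [hN] using fun hij => hM _ hij

theorem sum_matchingWeights_le_of_mem (hM : ∀ e ∈ M, Adj e.1 e.2) (hN : ∀ j, j ∈ N ↔ Adj i j)
    (hγ : 0 ≤ γ) (hi : i ∈ U) :
    ∑ j ∈ N, matchingWeights M U γ i j ≤ γ * (#N - 2 * {j | (i, j) ∈ M}.ncard) := by
  rw [ncard_matched_eq_card_filter hM hN]
  have hmatched : ∑ j ∈ N with (i, j) ∈ M, matchingWeights M U γ i j =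
      -γ * #{j ∈ N | (i, j) ∈ M} := by
    rw [sum_congr rfl fun j hj => matchingWeights_of_mem ⟨(mem_filter.1 hj).2, hi⟩, sum_const,
      nsmul_eq_mul, mul_comm]
  have hrest : ∑ j ∈ N with (i, j) ∉ M, matchingWeights M U γ i j ≤
      #{j ∈ N | (i, j) ∉ M} * γ := by
    simpa only [nsmul_eq_mul] using sum_le_card_nsmul _ _ _ fun j _ => matchingWeights_le hγ
  have hcard : (#{j ∈ N | (i, j) ∈ M} : ℝ) + #{j ∈ N | (i, j) ∉ M} = #N := by
    exact_mod_cast card_filter_add_card_filter_not _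
  rw [← sum_filter_add_sum_filter_not N fun j => (i, j) ∈ M, ← hcard]
  linarith

theorem card_filter_covered_le_ncard [Finite C] (hM : ∀ e ∈ M, Adj e.1 e.2)
    (hN : ∀ j, j ∈ N ↔ Adj i j) :
    #{j ∈ N | j ∈ coveredChecks M U} ≤ ({j | Adj i j} ∩ {j | ∃ u ∈ U, Adj u j}).ncard := by
  rw [← Set.ncard_coe_finset]
  refine Set.ncard_le_ncard (fun j hj => ?_)
  obtain ⟨hjN, u, hu, huj⟩ := mem_filter.1 hj
  exact ⟨(hN j).1 hjN, u, hu, hM _ huj⟩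

/-- A node outside `U` either has few neighbours in `N(U)`, or, by `ht`, many matching edges,
none of which goes to a check covered from `U`. -/
theorem card_filter_covered_le_of_notMem [Finite C] (hM : ∀ e ∈ M, Adj e.1 e.2)
    (hinj : ∀ j a b, (a, j) ∈ M → (b, j) ∈ M → a = b) (hN : ∀ j, j ∈ N ↔ Adj i j) (hi : i ∉ U)
    {t : ℝ} (ht : (1 - t) * #N < ({j | Adj i j} ∩ {j | ∃ u ∈ U, Adj u j}).ncard →
      t * #N ≤ {j | (i, j) ∈ M}.ncard) :
    #{j ∈ N | j ∈ coveredChecks M U} ≤ (1 - t) * #N := by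
  by_cases hmany : (1 - t) * #N < ({j | Adj i j} ∩ {j | ∃ u ∈ U, Adj u j}).ncard
  · have hsum : (#{j ∈ N | j ∈ coveredChecks M U} : ℝ) + #{j ∈ N | (i, j) ∈ M} ≤ #N := by
      exact_mod_cast card_covered_add_card_matched_le hinj N hi
    have hmatched := ht hmany
    rw [ncard_matched_eq_card_filter hM hN] at hmatched
    linarith
  · have hfew : (#{j ∈ N | j ∈ coveredChecks M U} : ℝ) ≤
        ({j | Adj i j} ∩ {j | ∃ u ∈ U, Adj u j}).ncard := by
      exact_mod_cast card_filter_covered_le_ncard hM hN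
    linarith

end

theorem delta_matching_gives_feasible_weights
    (n m : ℕ) (Adj : Fin n → Fin m → Prop)
    (dv : ℕ) (hdv : 1 ≤ dv)
    (hdeg : ∀ i : Fin n, Set.ncard {j | Adj i j} = dv)
    (W δ : ℝ) (hW : 1 / 2 ≤ W) (hδ : δ > 1 - 1 / (4 * W + 2))
    (U : Set (Fin n))
    (Udot : Set (Fin n))
    (hUdot : Udot = {i | i ∉ U ∧
      (1 - (2 * δ - 1)) * (dv : ℝ) < (Set.ncard ({j | Adj i j} ∩ {j | ∃ u ∈ U, Adj u j}) : ℝ)})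
    (M : Set (Fin n × Fin m))
    (hMedges : ∀ e ∈ M, Adj e.1 e.2 ∧ e.1 ∈ U ∪ Udot)
    (hMcheck : ∀ j : Fin m, Set.ncard {i | (i, j) ∈ M} ≤ 1)
    (hMU : ∀ i ∈ U, δ * (dv : ℝ) ≤ (Set.ncard {j | (i, j) ∈ M} : ℝ))
    (hMUdot : ∀ i ∈ Udot, (2 * δ - 1) * (dv : ℝ) ≤ (Set.ncard {j | (i, j) ∈ M} : ℝ))
    (lam' : Fin n → ℝ)
    (hlamW : ∀ i, -W ≤ lam' i)
    (hlamU : ∀ i, i ∉ U → 1 / 2 ≤ lam' i) :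
    ∃ τ : Fin n → Fin m → ℝ,
      (∀ (j : Fin m) (i i' : Fin n), i ≠ i' → Adj i j → Adj i' j → 0 ≤ τ i j + τ i' j) ∧
      (∀ i : Fin n, ∑ᶠ j ∈ {j : Fin m | Adj i j}, τ i j < lam' i) := by
  classical
  have hinj : ∀ j a b, (a, j) ∈ M → (b, j) ∈ M → a = b :=
    fun j a b ha hb => (Set.ncard_le_one (Set.toFinite _)).1 (hMcheck j) a ha b hb
  have hMAdj : ∀ e ∈ M, Adj e.1 e.2 := fun e he => (hMedges e he).1
  have hdv0 : (0 : ℝ) < dv := by exact_mod_cast hdv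
  set γ := (2 * W + 1) / (2 * dv) with hγdef
  have hγ : 0 ≤ γ := div_nonneg (by linarith) (by positivity)
  have hγdv : γ * dv = (2 * W + 1) / 2 := by rw [hγdef]; field_simp
  have hδ' : (1 - δ) * (4 * W + 2) < 1 := (lt_div_iff₀ (by linarith)).1 (by linarith)
  refine ⟨matchingWeights M U γ, fun j i i' hne _ _ => matchingWeights_add_nonneg hinj hγ hne j,
    fun i => ?_⟩
  rw [finsum_mem_eq_toFinset_sum]
  have hN : ∀ j, j ∈ {j | Adj i j}.toFinset ↔ Adj i j := fun j => Set.mem_toFinset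
  have hdegN : (#{j | Adj i j}.toFinset : ℝ) = dv := by rw [← Set.ncard_eq_toFinset_card', hdeg]
  by_cases hi : i ∈ U
  · calc _ ≤ γ * (dv - 2 * {j | (i, j) ∈ M}.ncard) :=
          hdegN ▸ sum_matchingWeights_le_of_mem hMAdj hN hγ hi
      _ ≤ γ * (dv - 2 * (δ * dv)) := by gcongr; exact hMU i hi
      _ = (2 * W + 1) * (1 - 2 * δ) / 2 := by linear_combination (1 - 2 * δ) * hγdv
      _ < -W := by linarith
      _ ≤ lam' i := hlamW i
  · have hcovered := card_filter_covered_le_of_notMem hMAdj hinj hN hi (t := 2 * δ - 1)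
      fun h => hdegN ▸ hMUdot i (by rw [hUdot]; exact ⟨hi, hdegN ▸ h⟩)
    calc _ = _ := sum_matchingWeights_of_notMem _ hi
      _ ≤ γ * ((1 - (2 * δ - 1)) * dv) := by rw [← hdegN]; gcongr
      _ = (2 * W + 1) * (2 - 2 * δ) / 2 := by linear_combination (2 - 2 * δ) * hγdv
      _ < 1 / 2 := by linarith
      _ ≤ lam' i := hlamU i hi
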